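/- The k-dimensional subspace robust Wasserstein distance S_k satisfies the triangle inequality: for all μ₀, μ₁, μ₂ ∈ P₂(ℝ^d), S_k(μ₀,μ₂) ≤ S_k(μ₀,μ₁) + S_k(μ₁,μ₂). -/

import Mathlib

noncomputable section
open MeasureTheory Matrix

open scoped ComplexOrder in
/-- The positive semidefinite square root of a positive semidefinite matrix
(removed from Mathlib; restored with its old definition). -/
def Matrix.PosSemidef.sqrt {n 𝕜 : Type*} [Fintype n] [DecidableEq n] [RCLike 𝕜]
    {A : Matrix n n 𝕜} (hA : A.PosSemidef) : Matrix n n 𝕜 :=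
  hA.1.eigenvectorUnitary.1 * diagonal ((↑) ∘ (√·) ∘ hA.1.eigenvalues) *
    (star hA.1.eigenvectorUnitary : Matrix n n 𝕜)

abbrev Ed (d : ℕ) := EuclideanSpace ℝ (Fin d)

def couplings {d : ℕ} (μ ν : Measure (Ed d)) : Set (Measure (Ed d × Ed d)) :=
  {π | IsProbabilityMeasure π ∧ π.map Prod.fst = μ ∧ π.map Prod.snd = ν}

def transportCost {d : ℕ} (π : Measure (Ed d × Ed d)) : ℝ :=
  ∫ p, ‖p.1 - p.2‖ ^ 2 ∂π

/-- Squared 2-Wasserstein distance. -/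
def W2sq {d : ℕ} (μ ν : Measure (Ed d)) : ℝ :=
  sInf (transportCost '' couplings μ ν)

/-- Subspace robust Wasserstein distance, max-over-`Ω` formulation:
`S_k(μ,ν) = sup { W₂((Ω^{1/2})_#μ, (Ω^{1/2})_#ν) : 0 ⪯ Ω ⪯ I, tr Ω = k }`. -/
def SRW {d : ℕ} (k : ℕ) (μ ν : Measure (Ed d)) : ℝ :=
  sSup {x | ∃ Ω : Matrix (Fin d) (Fin d) ℝ, ∃ hΩ : Ω.PosSemidef,
      (1 - Ω).PosSemidef ∧ Ω.trace = (k : ℝ) ∧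
      x = Real.sqrt (W2sq (μ.map (Matrix.toEuclideanLin hΩ.sqrt))
                          (ν.map (Matrix.toEuclideanLin hΩ.sqrt)))}

/-!
For an admissible `Ω`, the map `x ↦ Ω^{1/2} x` is a linear contraction because `Ω ⪯ I`, so it
preserves finite second moments and does not increase `W₂`; in particular each `S_k(μ, ν)` is a
supremum of a set bounded by `W₂(μ, ν)`. The triangle inequality for `S_k` then follows `Ω` by `Ω`
from the one for `W₂`, which is proved by gluing two couplings along their common marginal
(disintegration) and applying Minkowski's inequality in `L²` to
`x₀ - x₂ = (x₀ - x₁) + (x₁ - x₂)`.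
-/

open ProbabilityTheory ENNReal

lemma Real.le_sInf_add_sInf {s t : Set ℝ} (hs : s.Nonempty) (ht : t.Nonempty) {a : ℝ}
    (h : ∀ x ∈ s, ∀ y ∈ t, a ≤ x + y) : a ≤ sInf s + sInf t := by
  have hs' : ∀ x ∈ s, a - x ≤ sInf t := fun x hx =>
    le_csInf ht fun y hy => by linarith [h x hx y hy]
  have : a - sInf t ≤ sInf s := le_csInf hs fun x hx => by linarith [hs' x hx]
  linarith

section Gluing

variable {E : Type*} [MeasurableSpace E]

lemma MeasureTheory.Measure.map_compProd_prod_fst {α : Type*} [MeasurableSpace α]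
    (μ : Measure α) [SFinite μ] (κ η : Kernel α E) [IsMarkovKernel κ] [IsMarkovKernel η] :
    (μ ⊗ₘ (κ ×ₖ η)).map (Prod.map id Prod.fst) = μ ⊗ₘ κ := by
  rw [← Measure.compProd_map measurable_fst, ← Kernel.fst_eq, Kernel.fst_prod]

lemma MeasureTheory.Measure.map_compProd_prod_snd {α : Type*} [MeasurableSpace α]
    (μ : Measure α) [SFinite μ] (κ η : Kernel α E) [IsMarkovKernel κ] [IsMarkovKernel η] :
    (μ ⊗ₘ (κ ×ₖ η)).map (Prod.map id Prod.snd) = μ ⊗ₘ η := by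
  rw [← Measure.compProd_map measurable_snd, ← Kernel.snd_eq, Kernel.snd_prod]

lemma MeasureTheory.Measure.exists_gluing [StandardBorelSpace E] [Nonempty E]
    (π₀₁ π₁₂ : Measure (E × E)) [IsProbabilityMeasure π₀₁] [IsProbabilityMeasure π₁₂]
    (h : π₀₁.snd = π₁₂.fst) :
    ∃ τ : Measure (E × E × E), IsProbabilityMeasure τ ∧
      τ.map (fun p => (p.1, p.2.1)) = π₀₁ ∧ τ.map Prod.snd = π₁₂ := by
  -- glue along the middle coordinate: `σ` lives on `(x₁, x₀, x₂)`
  set σ := π₁₂.fst ⊗ₘ ((π₀₁.map Prod.swap).condKernel ×ₖ π₁₂.condKernel)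
  have hσ : Measurable fun p : E × E × E => (p.2.1, p.1, p.2.2) := by fun_prop
  refine ⟨σ.map fun p => (p.2.1, p.1, p.2.2), isProbabilityMeasure_map hσ.aemeasurable, ?_, ?_⟩
  · have h₀₁ : σ.map (Prod.map id Prod.fst) = π₀₁.map Prod.swap := by
      rw [Measure.map_compProd_prod_fst, ← h, ← Measure.fst_map_swap, Measure.disintegrate]
    calc (σ.map fun p => (p.2.1, p.1, p.2.2)).map (fun p => (p.1, p.2.1))
        = (σ.map (Prod.map id Prod.fst)).map Prod.swap := by
          rw [Measure.map_map (by fun_prop) hσ, Measure.map_map measurable_swap (by fun_prop)]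
          rfl
      _ = π₀₁ := by
          rw [h₀₁, Measure.map_map measurable_swap measurable_swap, Prod.swap_swap_eq,
            Measure.map_id]
  · rw [Measure.map_map measurable_snd hσ]
    exact (Measure.map_compProd_prod_snd _ _ _).trans (π₁₂.disintegrate π₁₂.condKernel)

end Gluing

lemma sqrt_integral_norm_sq_eq_eLpNorm {α F : Type*} [MeasurableSpace α] [NormedAddCommGroup F]
    {μ : Measure α} {g : α → F}
    (hg : AEStronglyMeasurable g μ) :
    √(∫ x, ‖g x‖ ^ 2 ∂μ) = (eLpNorm g 2 μ).toReal := by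
  rw [integral_eq_lintegral_of_nonneg_ae (.of_forall fun x => by positivity) (by fun_prop),
    eLpNorm_eq_lintegral_rpow_enorm_toReal two_ne_zero ofNat_ne_top, ← toReal_rpow,
    Real.sqrt_eq_rpow]
  simp [ofReal_pow]

section Wasserstein

variable {d : ℕ}

lemma transportCost_nonneg (π : Measure (Ed d × Ed d)) : 0 ≤ transportCost π :=
  integral_nonneg fun _ => by positivity

lemma prod_mem_couplings (μ ν : Measure (Ed d)) [IsProbabilityMeasure μ]
    [IsProbabilityMeasure ν] : μ.prod ν ∈ couplings μ ν :=
  ⟨inferInstance, Measure.fst_prod, Measure.snd_prod⟩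

lemma W2sq_le_transportCost {μ ν : Measure (Ed d)} {π : Measure (Ed d × Ed d)}
    (hπ : π ∈ couplings μ ν) : W2sq μ ν ≤ transportCost π :=
  csInf_le ⟨0, Set.forall_mem_image.2 fun π _ => transportCost_nonneg π⟩ ⟨π, hπ, rfl⟩

lemma sqrt_transportCost_map {X : Type*} [MeasurableSpace X] {τ : Measure X}
    {f : X → Ed d × Ed d} (hf : Measurable f) :
    √(transportCost (τ.map f)) = (eLpNorm (fun x => (f x).1 - (f x).2) 2 τ).toReal := by
  rw [transportCost, sqrt_integral_norm_sq_eq_eLpNorm (by fun_prop),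
    eLpNorm_map_measure (by fun_prop) hf.aemeasurable]
  rfl

lemma memLp_fst_sub_snd {μ ν : Measure (Ed d)} {π : Measure (Ed d × Ed d)}
    (hπ : π ∈ couplings μ ν) (hμ : Integrable (fun x => ‖x‖ ^ 2) μ)
    (hν : Integrable (fun x => ‖x‖ ^ 2) ν) :
    MemLp (fun p : Ed d × Ed d => p.1 - p.2) 2 π := by
  have hμ' := (memLp_two_iff_integrable_sq_norm (f := id) aestronglyMeasurable_id).2 hμ
  have hν' := (memLp_two_iff_integrable_sq_norm (f := id) aestronglyMeasurable_id).2 hν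
  rw [← hπ.2.1, memLp_map_measure_iff (by fun_prop) (by fun_prop)] at hμ'
  rw [← hπ.2.2, memLp_map_measure_iff (by fun_prop) (by fun_prop)] at hν'
  exact hμ'.sub hν'

lemma sqrt_W2sq_le_of_mem_couplings {μ₀ μ₁ μ₂ : Measure (Ed d)}
    {π₀₁ π₁₂ : Measure (Ed d × Ed d)} (h₀₁ : π₀₁ ∈ couplings μ₀ μ₁)
    (h₁₂ : π₁₂ ∈ couplings μ₁ μ₂) (hL₀₁ : MemLp (fun p => p.1 - p.2) 2 π₀₁)
    (hL₁₂ : MemLp (fun p => p.1 - p.2) 2 π₁₂) :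
    √(W2sq μ₀ μ₂) ≤ √(transportCost π₀₁) + √(transportCost π₁₂) := by
  have := h₀₁.1
  have := h₁₂.1
  obtain ⟨τ, hτ, hτ₀₁, hτ₁₂⟩ := Measure.exists_gluing π₀₁ π₁₂ (by
    rw [Measure.snd, h₀₁.2.2, Measure.fst, h₁₂.2.1])
  have hπ : τ.map (fun p => (p.1, p.2.2)) ∈ couplings μ₀ μ₂ := by
    refine ⟨Measure.isProbabilityMeasure_map (by fun_prop), ?_, ?_⟩
    · rw [Measure.map_map measurable_fst (by fun_prop), ← h₀₁.2.1, ← hτ₀₁,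
        Measure.map_map measurable_fst (by fun_prop)]
      rfl
    · rw [Measure.map_map measurable_snd (by fun_prop), ← h₁₂.2.2, ← hτ₁₂,
        Measure.map_map measurable_snd measurable_snd]
      rfl
  rw [← hτ₀₁, memLp_map_measure_iff (by fun_prop) (by fun_prop)] at hL₀₁
  rw [← hτ₁₂, memLp_map_measure_iff (by fun_prop) (by fun_prop)] at hL₁₂
  have hfin₀₁ : eLpNorm (fun p : Ed d × Ed d × Ed d => p.1 - p.2.1) 2 τ ≠ ⊤ :=
    hL₀₁.eLpNorm_ne_top
  have hfin₁₂ : eLpNorm (fun p : Ed d × Ed d × Ed d => p.2.1 - p.2.2) 2 τ ≠ ⊤ :=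
    hL₁₂.eLpNorm_ne_top
  rw [← hτ₀₁, ← hτ₁₂, sqrt_transportCost_map (by fun_prop), sqrt_transportCost_map (by fun_prop)]
  dsimp only
  rw [← ENNReal.toReal_add hfin₀₁ hfin₁₂]
  calc √(W2sq μ₀ μ₂) ≤ √(transportCost (τ.map fun p => (p.1, p.2.2))) :=
        Real.sqrt_le_sqrt (W2sq_le_transportCost hπ)
    _ = (eLpNorm (fun p => (p.1 - p.2.1) + (p.2.1 - p.2.2)) 2 τ).toReal := by
        simp_rw [sub_add_sub_cancel]; exact sqrt_transportCost_map (by fun_prop)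
    _ ≤ _ := ENNReal.toReal_mono (by finiteness)
        (eLpNorm_add_le (by fun_prop) (by fun_prop) one_le_two)

lemma sqrt_W2sq_eq_sInf (μ ν : Measure (Ed d)) [IsProbabilityMeasure μ]
    [IsProbabilityMeasure ν] :
    √(W2sq μ ν) = sInf ((fun π => √(transportCost π)) '' couplings μ ν) := by
  rw [W2sq, Monotone.map_csInf_of_continuousAt Real.continuous_sqrt.continuousAt
    (fun _ _ => Real.sqrt_le_sqrt) ((Set.nonempty_of_mem (prod_mem_couplings μ ν)).image _)
    ⟨0, Set.forall_mem_image.2 fun π _ => transportCost_nonneg π⟩, Set.image_image]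

theorem sqrt_W2sq_triangle (μ₀ μ₁ μ₂ : Measure (Ed d))
    [IsProbabilityMeasure μ₀] [IsProbabilityMeasure μ₁] [IsProbabilityMeasure μ₂]
    (h₀ : Integrable (fun x => ‖x‖ ^ 2) μ₀) (h₁ : Integrable (fun x => ‖x‖ ^ 2) μ₁)
    (h₂ : Integrable (fun x => ‖x‖ ^ 2) μ₂) :
    √(W2sq μ₀ μ₂) ≤ √(W2sq μ₀ μ₁) + √(W2sq μ₁ μ₂) := by
  rw [sqrt_W2sq_eq_sInf μ₀ μ₁, sqrt_W2sq_eq_sInf μ₁ μ₂]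
  refine Real.le_sInf_add_sInf ((Set.nonempty_of_mem (prod_mem_couplings μ₀ μ₁)).image _)
    ((Set.nonempty_of_mem (prod_mem_couplings μ₁ μ₂)).image _) ?_
  rintro _ ⟨π₀₁, h₀₁, rfl⟩ _ ⟨π₁₂, h₁₂, rfl⟩
  exact sqrt_W2sq_le_of_mem_couplings h₀₁ h₁₂ (memLp_fst_sub_snd h₀₁ h₀ h₁)
    (memLp_fst_sub_snd h₁₂ h₁ h₂)

end Wasserstein

section Contraction

variable {d : ℕ} {f : Ed d →ₗ[ℝ] Ed d}

lemma integrable_norm_sq_map (hf : ∀ x, ‖f x‖ ≤ ‖x‖) {μ : Measure (Ed d)}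
    (hμ : Integrable (fun x => ‖x‖ ^ 2) μ) : Integrable (fun x => ‖x‖ ^ 2) (μ.map f) := by
  rw [integrable_map_measure (by fun_prop) (f.continuous_of_finiteDimensional.aemeasurable)]
  refine hμ.mono' (by fun_prop) (.of_forall fun x => ?_)
  simpa using pow_le_pow_left₀ (norm_nonneg _) (hf x) 2

lemma W2sq_map_le (hf : ∀ x, ‖f x‖ ≤ ‖x‖) (μ ν : Measure (Ed d)) [IsProbabilityMeasure μ]
    [IsProbabilityMeasure ν] (hμ : Integrable (fun x => ‖x‖ ^ 2) μ)
    (hν : Integrable (fun x => ‖x‖ ^ 2) ν) : W2sq (μ.map f) (ν.map f) ≤ W2sq μ ν := by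
  have hfm : Measurable f := f.continuous_of_finiteDimensional.measurable
  refine le_csInf ((Set.nonempty_of_mem (prod_mem_couplings μ ν)).image _) ?_
  rintro _ ⟨π, hπ, rfl⟩
  have := hπ.1
  have hmap : π.map (Prod.map f f) ∈ couplings (μ.map f) (ν.map f) := by
    refine ⟨Measure.isProbabilityMeasure_map (by fun_prop), ?_, ?_⟩
    · rw [Measure.map_map measurable_fst (by fun_prop), ← hπ.2.1,
        Measure.map_map hfm measurable_fst]
      rfl
    · rw [Measure.map_map measurable_snd (by fun_prop), ← hπ.2.2,
        Measure.map_map hfm measurable_snd]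
      rfl
  calc W2sq (μ.map f) (ν.map f) ≤ transportCost (π.map (Prod.map f f)) :=
        W2sq_le_transportCost hmap
    _ = ∫ p, ‖f (p.1 - p.2)‖ ^ 2 ∂π := by
        rw [transportCost, integral_map (by fun_prop) (by fun_prop)]
        simp only [Prod.map_fst, Prod.map_snd, map_sub]
    _ ≤ transportCost π :=
        integral_mono_of_nonneg (.of_forall fun _ => by positivity)
          ((memLp_two_iff_integrable_sq_norm (by fun_prop)).1 (memLp_fst_sub_snd hπ hμ hν))
          (.of_forall fun p => pow_le_pow_left₀ (norm_nonneg _) (hf _) 2)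

theorem sqrt_W2sq_map_triangle (hf : ∀ x, ‖f x‖ ≤ ‖x‖) (μ₀ μ₁ μ₂ : Measure (Ed d))
    [IsProbabilityMeasure μ₀] [IsProbabilityMeasure μ₁] [IsProbabilityMeasure μ₂]
    (h₀ : Integrable (fun x => ‖x‖ ^ 2) μ₀) (h₁ : Integrable (fun x => ‖x‖ ^ 2) μ₁)
    (h₂ : Integrable (fun x => ‖x‖ ^ 2) μ₂) :
    √(W2sq (μ₀.map f) (μ₂.map f)) ≤
      √(W2sq (μ₀.map f) (μ₁.map f)) + √(W2sq (μ₁.map f) (μ₂.map f)) := by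
  have hfm : Measurable f := f.continuous_of_finiteDimensional.measurable
  have := Measure.isProbabilityMeasure_map (μ := μ₀) hfm.aemeasurable
  have := Measure.isProbabilityMeasure_map (μ := μ₁) hfm.aemeasurable
  have := Measure.isProbabilityMeasure_map (μ := μ₂) hfm.aemeasurable
  exact sqrt_W2sq_triangle _ _ _ (integrable_norm_sq_map hf h₀) (integrable_norm_sq_map hf h₁)
    (integrable_norm_sq_map hf h₂)

end Contraction

namespace Matrix

variable {n : Type*} [Fintype n] [DecidableEq n]

open scoped ComplexOrder in
lemma norm_toEuclideanLin_apply_le {𝕜 : Type*} [RCLike 𝕜] {B : Matrix n n 𝕜}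
    (hB : B.IsHermitian) (h : (1 - B * B).PosSemidef) (x : EuclideanSpace 𝕜 n) :
    ‖toEuclideanLin B x‖ ≤ ‖x‖ := by
  have hBB : toEuclideanLin (B * B) x = toEuclideanLin B (toEuclideanLin B x) := by
    ext i
    simp [toLpLin_apply, mulVec_mulVec]
  have hpos := (isPositive_toEuclideanLin_iff.2 h).re_inner_nonneg_left x
  rw [map_sub, LinearMap.sub_apply, hBB, inner_sub_left,
    isSymmetric_toEuclideanLin_iff.2 hB] at hpos
  simp only [toLpLin_one, LinearMap.id_coe, id_eq, inner_self_eq_norm_sq_to_K, map_sub,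
    RCLike.re_ofReal_pow, sub_nonneg] at hpos
  exact (pow_le_pow_iff_left₀ (norm_nonneg _) (norm_nonneg _) two_ne_zero).1 hpos

namespace PosSemidef

variable {A : Matrix n n ℝ} (hA : A.PosSemidef)
include hA

lemma sqrt_eq_cfc : hA.sqrt = cfc Real.sqrt A := by
  rw [hA.1.cfc_eq]
  rfl

lemma sqrt_mul_self : hA.sqrt * hA.sqrt = A := by
  rw [hA.sqrt_eq_cfc, ← cfc_mul _ _ A]
  conv_rhs => rw [← cfc_id' ℝ A hA.1]
  refine cfc_congr fun x hx => Real.mul_self_sqrt ?_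
  rw [hA.1.spectrum_real_eq_range_eigenvalues] at hx
  obtain ⟨i, rfl⟩ := hx
  exact hA.eigenvalues_nonneg i

lemma isHermitian_sqrt : hA.sqrt.IsHermitian := by
  rw [hA.sqrt_eq_cfc]
  exact cfc_predicate _ _

lemma norm_toEuclideanLin_sqrt_apply_le (h : (1 - A).PosSemidef) (x : EuclideanSpace ℝ n) :
    ‖toEuclideanLin hA.sqrt x‖ ≤ ‖x‖ :=
  norm_toEuclideanLin_apply_le hA.isHermitian_sqrt (by rwa [hA.sqrt_mul_self]) x

end PosSemidef

end Matrix

lemma SRW_nonneg {d : ℕ} (k : ℕ) (μ ν : Measure (Ed d)) : 0 ≤ SRW k μ ν :=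
  Real.sSup_nonneg fun _ ⟨_, _, _, _, hx⟩ => hx ▸ Real.sqrt_nonneg _

lemma sqrt_W2sq_map_sqrt_le_SRW {d k : ℕ} {μ ν : Measure (Ed d)} [IsProbabilityMeasure μ]
    [IsProbabilityMeasure ν] (hμ : Integrable (fun x => ‖x‖ ^ 2) μ)
    (hν : Integrable (fun x => ‖x‖ ^ 2) ν) {Ω : Matrix (Fin d) (Fin d) ℝ}
    (hΩ : Ω.PosSemidef) (h1 : (1 - Ω).PosSemidef) (htr : Ω.trace = k) :
    √(W2sq (μ.map (toEuclideanLin hΩ.sqrt)) (ν.map (toEuclideanLin hΩ.sqrt))) ≤ SRW k μ ν := by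
  refine le_csSup ⟨√(W2sq μ ν), ?_⟩ ⟨Ω, hΩ, h1, htr, rfl⟩
  rintro _ ⟨Ω', hΩ', h1', -, rfl⟩
  exact Real.sqrt_le_sqrt (W2sq_map_le (hΩ'.norm_toEuclideanLin_sqrt_apply_le h1') μ ν hμ hν)

theorem SRW_triangle_general {d : ℕ} (k : ℕ)
    (μ₀ μ₁ μ₂ : Measure (Ed d))
    [IsProbabilityMeasure μ₀] [IsProbabilityMeasure μ₁] [IsProbabilityMeasure μ₂]
    (h₀ : Integrable (fun x => ‖x‖ ^ 2) μ₀) (h₁ : Integrable (fun x => ‖x‖ ^ 2) μ₁)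
    (h₂ : Integrable (fun x => ‖x‖ ^ 2) μ₂) :
    SRW k μ₀ μ₂ ≤ SRW k μ₀ μ₁ + SRW k μ₁ μ₂ := by
  refine Real.sSup_le ?_ (add_nonneg (SRW_nonneg k μ₀ μ₁) (SRW_nonneg k μ₁ μ₂))
  rintro _ ⟨Ω, hΩ, h1, htr, rfl⟩
  have hA := hΩ.norm_toEuclideanLin_sqrt_apply_le h1
  exact (sqrt_W2sq_map_triangle hA μ₀ μ₁ μ₂ h₀ h₁ h₂).trans <|
    add_le_add (sqrt_W2sq_map_sqrt_le_SRW h₀ h₁ hΩ h1 htr)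
      (sqrt_W2sq_map_sqrt_le_SRW h₁ h₂ hΩ h1 htr)

/-- The subspace robust Wasserstein distance satisfies the triangle inequality. -/
theorem SRW_triangle {d : ℕ} (k : ℕ) (hk : 1 ≤ k) (hkd : k ≤ d)
    (μ₀ μ₁ μ₂ : Measure (Ed d))
    [IsProbabilityMeasure μ₀] [IsProbabilityMeasure μ₁] [IsProbabilityMeasure μ₂]
    (h₀ : Integrable (fun x => ‖x‖ ^ 2) μ₀) (h₁ : Integrable (fun x => ‖x‖ ^ 2) μ₁)
    (h₂ : Integrable (fun x => ‖x‖ ^ 2) μ₂) :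
    SRW k μ₀ μ₂ ≤ SRW k μ₀ μ₁ + SRW k μ₁ μ₂ :=
  SRW_triangle_general k μ₀ μ₁ μ₂ h₀ h₁ h₂
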